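/- Let ψ = C₁ ∧ … ∧ C_r be a Boolean formula in conjunctive normal form over the variables x₁,…,x_k. Then ψ is satisfiable if and only if the reachability game G_ψ is not k-transducer live. -/

import Mathlib

/-- A two-player game arena: Player 1 plays actions from `A` at `V1`-vertices,
Player 2 plays actions from `B` at `V2`-vertices. `F1`/`F2` are the colorings. -/
structure Game (V1 V2 A B : Type) where
  E1 : V1 → A → V2
  E2 : V2 → B → V1
  init : V1
  F1 : V1 → ℕ
  F2 : V2 → ℕ

/-- A finite-state transducer with output alphabet `A`, input alphabet `B`
and state set `M`. -/
structure Transducer (A B M : Type) where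
  start : M
  step : M → B → M
  out : M → A

/-- The transition function extended to input words, starting from state `m`. -/
def Transducer.stepFrom {A B M : Type} (T : Transducer A B M) (m : M) (x : List B) : M :=
  x.foldl T.step m

/-- `L̂ : B* → A`, the output of the transducer after reading an input word. -/
def Transducer.outWord {A B M : Type} (T : Transducer A B M) (x : List B) : A :=
  T.out (T.stepFrom T.start x)

/-- The history (element of `(A×B)*`) consisting of the first `n` rounds of an
infinite word given by `a` and `b`. -/
def hist {A B : Type} (a : ℕ → A) (b : ℕ → B) (n : ℕ) : List (A × B) :=
  (List.range n).map (fun i => (a i, b i))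

/-- The infinite word `a₀b₀a₁b₁…` agrees with the Player-2 strategy `σ`. -/
def AgreesP2 {A B : Type} (σ : List (A × B) → A → B) (a : ℕ → A) (b : ℕ → B) : Prop :=
  ∀ n, b n = σ (hist a b n) (a n)

/-- The infinite word `a₀b₀a₁b₁…` agrees with the Player-1 strategy `τ`. -/
def AgreesP1 {A B : Type} (τ : List (A × B) → A) (a : ℕ → A) (b : ℕ → B) : Prop :=
  ∀ n, a n = τ (hist a b n)

/-- The Player-1 strategy `f_T` induced by a transducer `T`. -/
def Transducer.strat {A B M : Type} (T : Transducer A B M) : List (A × B) → A :=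
  fun h => T.outWord (h.map Prod.snd)

/-- An infinite word agrees with the transducer `T` (for Player 1). -/
def InfAgrees {A B M : Type} (T : Transducer A B M) (a : ℕ → A) (b : ℕ → B) : Prop :=
  AgreesP1 T.strat a b

/-- A finite word in `(A×B)*` agrees with the transducer `T` (for Player 1). -/
def FinAgrees {A B M : Type} (T : Transducer A B M) (w : List (A × B)) : Prop :=
  ∀ i : Fin w.length, (w.get i).1 = T.outWord ((w.take i.val).map Prod.snd)

/-- The infinite word given by `a`, `b` extends the finite word `w`. -/
def ExtendsWord {A B : Type} (w : List (A × B)) (a : ℕ → A) (b : ℕ → B) : Prop :=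
  ∀ i : Fin w.length, a i.val = (w.get i).1 ∧ b i.val = (w.get i).2

/-- The Player-1 vertices `u₀ u₁ u₂ …` of the play generated by the word
`a₀b₀a₁b₁…` from the Player-1 vertex `u0`. -/
def Game.playU {V1 V2 A B : Type} (G : Game V1 V2 A B) (u0 : V1) (a : ℕ → A) (b : ℕ → B) :
    ℕ → V1
  | 0 => u0
  | n + 1 => G.E2 (G.E1 (G.playU u0 a b n) (a n)) (b n)

/-- The sequence of colors `F(u₀) F(v₀) F(u₁) F(v₁) …` along the play generated
by the word `a₀b₀a₁b₁…` from `u0`. -/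
def Game.colorSeq {V1 V2 A B : Type} (G : Game V1 V2 A B) (u0 : V1) (a : ℕ → A) (b : ℕ → B)
    (n : ℕ) : ℕ :=
  if n % 2 = 0 then G.F1 (G.playU u0 a b (n / 2))
  else G.F2 (G.E1 (G.playU u0 a b (n / 2)) (a (n / 2)))

/-- Reachability winning condition for Player 2: some vertex of color 2 occurs. -/
def Game.reachWin {V1 V2 A B : Type} (G : Game V1 V2 A B) (u0 : V1) (a : ℕ → A) (b : ℕ → B) :
    Prop :=
  ∃ n, G.colorSeq u0 a b n = 2

/-- Parity winning condition for Player 2: the largest color occurring infinitely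
often along the play is even. -/
def Game.parityWin {V1 V2 A B : Type} (G : Game V1 V2 A B) (u0 : V1) (a : ℕ → A) (b : ℕ → B) :
    Prop :=
  ∃ c, Even c ∧ {n | G.colorSeq u0 a b n = c}.Infinite ∧
    ∀ d, {n | G.colorSeq u0 a b n = d}.Infinite → d ≤ c

/-- `G` is `k`-transducer live (for the parity winning condition): every finite word
agreeing with some `k`-transducer for Player 1 can be extended to an infinite word that
agrees with some `k`-transducer for Player 1 and whose play is winning for Player 2. -/
def Game.kLiveParity {V1 V2 A B : Type} (G : Game V1 V2 A B) (k : ℕ) : Prop :=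
  ∀ w : List (A × B), (∃ T : Transducer A B (Fin k), FinAgrees T w) →
    ∃ a b, ExtendsWord w a b ∧ (∃ T : Transducer A B (Fin k), InfAgrees T a b) ∧
      G.parityWin G.init a b

/-- `G` is `k`-transducer live (for the reachability winning condition). -/
def Game.kLiveReach {V1 V2 A B : Type} (G : Game V1 V2 A B) (k : ℕ) : Prop :=
  ∀ w : List (A × B), (∃ T : Transducer A B (Fin k), FinAgrees T w) →
    ∃ a b, ExtendsWord w a b ∧ (∃ T : Transducer A B (Fin k), InfAgrees T a b) ∧
      G.reachWin G.init a b

/-- The history of the unique word that agrees with the Player-1 strategy `τ` and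
the Player-2 strategy `σ`. -/
def inducedHist {A B : Type} (τ : List (A × B) → A) (σ : List (A × B) → A → B) :
    ℕ → List (A × B)
  | 0 => []
  | n + 1 =>
      let h := inducedHist τ σ n
      h ++ [(τ h, σ h (τ h))]

/-- The Player-1 actions of the unique word agreeing with `τ` and `σ`. -/
def inducedA {A B : Type} (τ : List (A × B) → A) (σ : List (A × B) → A → B) (n : ℕ) : A :=
  τ (inducedHist τ σ n)

/-- The Player-2 actions of the unique word agreeing with `τ` and `σ`. -/
def inducedB {A B : Type} (τ : List (A × B) → A) (σ : List (A × B) → A → B) (n : ℕ) : B :=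
  σ (inducedHist τ σ n) (inducedA τ σ n)

/-- Player-1 actions in the CNF game: `(i, b)` assigns value `b` to `xᵢ`
(`⊤ᵢ` / `⊥ᵢ`). -/
abbrev CAct1 (k : ℕ) := Fin k × Bool

/-- Player-2 actions: the single dummy action `ε`. -/
abbrev CAct2 : Type := Unit

/-- A clause over `x₁,…,x_k`: `c i b = true` iff the literal asserting that `xᵢ`
has value `b` occurs in the clause. -/
def CClause (k : ℕ) := Fin k → Bool → Bool

/-- The clause `c` is satisfied by the assignment `v`. -/
def CClause.Sat {k : ℕ} (c : CClause k) (v : Fin k → Bool) : Prop :=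
  ∃ i, c i (v i) = true

/-- Satisfiability of the CNF formula `C₁ ∧ … ∧ C_r`. -/
def CNFSat {k r : ℕ} (C : Fin r → CClause k) : Prop :=
  ∃ v : Fin k → Bool, ∀ j : Fin r, (C j).Sat v

/-- Player-1 vertices: Player 1 is about to assign `xᵢ` in stage `j`, the status
flag `β` recording whether `C_j` is already satisfied; plus a Player-1 vertex of each
paradise (`para true` belongs to the Player-2 paradise, `para false` to the
Player-1 paradise). -/
inductive CV1 (k r : ℕ) where
  | node (j : Fin r) (i : Fin k) (β : Bool)
  | para (p : Bool)

/-- Player-2 vertices: the dummy-move vertices after `xᵢ` was assigned in stage `j`,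
plus a Player-2 vertex of each paradise. -/
inductive CV2 (k r : ℕ) where
  | node (j : Fin r) (i : Fin k) (β : Bool)
  | para (p : Bool)

/-- Transitions from Player-1 vertices: the legal action assigning `xᵢ` updates the
status flag; any other action leads to the Player-2 paradise. -/
def cnfE1 {k r : ℕ} (C : Fin r → CClause k) : CV1 k r → CAct1 k → CV2 k r
  | .node j i β, (i', bv) => if i' = i then .node j i (β || C j i bv) else .para true
  | .para p, _ => .para p

/-- Transitions from Player-2 vertices (via the dummy move): proceed to the next
variable; at the end of stage `j`, status `⊥` leads to the Player-2 paradise,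
status `⊤` leads to stage `j+1`, or to the Player-1 paradise after the last stage. -/
def cnfE2 {k r : ℕ} (C : Fin r → CClause k) : CV2 k r → CAct2 → CV1 k r
  | .node j i β, _ =>
      if h : (i : ℕ) + 1 < k then .node j ⟨(i : ℕ) + 1, h⟩ β
      else if β = true then
        if hj : (j : ℕ) + 1 < r then .node ⟨(j : ℕ) + 1, hj⟩ ⟨0, i.pos⟩ false
        else .para false
      else .para true
  | .para p, _ => .para p

/-- Coloring: the Player-2 paradise has color 2, all other vertices color 1. -/
def cnfF1 {k r : ℕ} : CV1 k r → ℕ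
  | .para true => 2
  | _ => 1

def cnfF2 {k r : ℕ} : CV2 k r → ℕ
  | .para true => 2
  | _ => 1

/-- The reachability game `G_ψ` for the CNF formula with clauses `C`. -/
def cnfGame {k r : ℕ} (hk : 0 < k) (hr : 0 < r) (C : Fin r → CClause k) :
    Game (CV1 k r) (CV2 k r) (CAct1 k) CAct2 where
  E1 := cnfE1 C
  E2 := cnfE2 C
  init := .node ⟨0, hr⟩ ⟨0, hk⟩ false
  F1 := cnfF1
  F2 := cnfF2

/-!
Player 2 has a single action, so a Player-1 transducer just emits a fixed sequence of
assignments, and a play avoids the Player-2 paradise exactly when, in every stage `j`, the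
variables are assigned in order and the assignment made in that stage satisfies `C_j`.
A satisfying assignment `v` is emitted by the `k`-state transducer that cycles through the
variables, and once its first `r * k` moves are played every extension ends in the Player-1
paradise. Conversely, if a `k`-transducer's own run avoids the Player-2 paradise, its first
stage already outputs all `k` variable indices, so each of its `k` states is identified by
the variable it assigns; hence it assigns every variable the same value in every stage, and
that assignment satisfies every clause.
-/

lemma Nat.mul_add_lt_mul {j r k i : ℕ} (hj : j < r) (hi : i < k) : j * k + i < r * k :=
  calc j * k + i < (j + 1) * k := by rw [Nat.succ_mul]; omega
    _ ≤ r * k := Nat.mul_le_mul_right k hj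

lemma exists_fin_eq_mul_add {r k n : ℕ} (hn : n < r * k) :
    ∃ (j : Fin r) (i : Fin k), n = j * k + i :=
  let x : Fin (r * k) := ⟨n, hn⟩
  ⟨x.divNat, x.modNat, (Nat.div_add_mod' n k).symm⟩

lemma Finite.exists_snd_eq_of_surjective_fst {α β : Type*} [Finite α] {o : α → α × β}
    (h : Function.Surjective fun m => (o m).1) : ∃ v : α → β, ∀ m, (o m).2 = v (o m).1 := by
  let e := Equiv.ofBijective _ ⟨Finite.injective_iff_surjective.2 h, h⟩
  refine ⟨fun i => (o (e.symm i)).2, fun m => ?_⟩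
  change (o m).2 = (o (e.symm (e m))).2
  rw [e.symm_apply_apply]

section Transducer

variable {A B M : Type}

lemma Transducer.outWord_eq_of_unique [Unique B] (T : Transducer A B M) (l : List B) :
    T.outWord l = T.out ((T.step · default)^[l.length] T.start) := by
  have hstep : T.step = fun m _ => T.step m default :=
    funext fun m => funext fun x => by rw [Subsingleton.elim x default]
  rw [Transducer.outWord, Transducer.stepFrom, hstep, List.foldl_const]

def Transducer.outSeq [Inhabited B] (T : Transducer A B M) (n : ℕ) : A :=
  T.out ((T.step · default)^[n] T.start)

lemma Transducer.infAgrees_outSeq [Unique B] (T : Transducer A B M) (b : ℕ → B) :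
    InfAgrees T T.outSeq b := by
  intro n
  simp [Transducer.strat, Transducer.outWord_eq_of_unique, hist, Transducer.outSeq]

lemma FinAgrees.extendsWord_outSeq [Unique B] {T : Transducer A B M} {w : List (A × B)}
    (h : FinAgrees T w) : ExtendsWord w T.outSeq fun _ => default := by
  intro i
  refine ⟨?_, Subsingleton.elim _ _⟩
  rw [h i, Transducer.outWord_eq_of_unique]
  simp [Transducer.outSeq, i.isLt.le]

lemma InfAgrees.finAgrees_hist {T : Transducer A B M} {a : ℕ → A} {b : ℕ → B}
    (h : InfAgrees T a b) (n : ℕ) : FinAgrees T (hist a b n) := by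
  intro i
  have hi : (i : ℕ) < n := by simpa [hist] using i.isLt
  have hget : (hist a b n).get i = (a i, b i) := by rw [List.get_eq_getElem]; simp [hist]
  have htake : (hist a b n).take i = hist a b i := by
    simp only [hist, ← List.map_take, List.take_range, min_eq_left hi.le]
  rw [hget, h i, Transducer.strat, htake]

lemma ExtendsWord.apply_eq_of_hist {a a' : ℕ → A} {b b' : ℕ → B} {n : ℕ}
    (h : ExtendsWord (hist a b n) a' b') {i : ℕ} (hi : i < n) : a' i = a i := by
  simpa [hist] using (h ⟨i, by simpa [hist] using hi⟩).1

variable {k : ℕ} {β : Type} (hk : 0 < k) (v : Fin k → β)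

def cyclicTransducer : Transducer (Fin k × β) B (Fin k) where
  start := ⟨0, hk⟩
  step m _ := ⟨(m + 1) % k, Nat.mod_lt _ hk⟩
  out m := (m, v m)

lemma cyclicTransducer_outSeq [Inhabited B] (n : ℕ) :
    (cyclicTransducer (B := B) hk v).outSeq n =
      (⟨n % k, Nat.mod_lt n hk⟩, v ⟨n % k, Nat.mod_lt n hk⟩) := by
  have hstate : ∀ n, ((cyclicTransducer (B := B) hk v).step · default)^[n] ⟨0, hk⟩ =
      ⟨n % k, Nat.mod_lt n hk⟩ := by
    intro n
    induction n with
    | zero => simp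
    | succ n ih =>
      rw [Function.iterate_succ_apply', ih]
      exact Fin.ext (Nat.mod_add_mod n k 1)
  exact congrArg _ (hstate n)

end Transducer

section CNFGame

variable {k r : ℕ} (C : Fin r → CClause k)

lemma cnfF1_eq_two_iff (u : CV1 k r) : cnfF1 u = 2 ↔ u = .para true := by
  rcases u with _ | _ | _ <;> simp [cnfF1]

lemma cnfF2_eq_two_iff (u : CV2 k r) : cnfF2 u = 2 ↔ u = .para true := by
  rcases u with _ | _ | _ <;> simp [cnfF2]

lemma cnfE1_node (j : Fin r) (i : Fin k) (β : Bool) (x : CAct1 k) :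
    cnfE1 C (.node j i β) x = if x.1 = i then .node j i (β || C j i x.2) else .para true := by
  cases x; rfl

lemma eq_of_cnfE2_cnfE1_ne_para {j : Fin r} {i : Fin k} {β : Bool} {x : CAct1 k} {u : CAct2}
    (h : cnfE2 C (cnfE1 C (.node j i β) x) u ≠ .para true) : x.1 = i := by
  by_contra hx
  exact h (by simp [cnfE1, hx, cnfE2])

instance (c : CClause k) (v : Fin k → Bool) : Decidable (c.Sat v) :=
  inferInstanceAs (Decidable (∃ i, c i (v i) = true))

def stageAssignment (a : ℕ → CAct1 k) (j : ℕ) (i : Fin k) : Bool :=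
  (a (j * k + i)).2

def stageStatus (a : ℕ → CAct1 k) (j : Fin r) (i : ℕ) : Bool :=
  decide (∃ i' : Fin k, (i' : ℕ) < i ∧ C j i' (stageAssignment a j i') = true)

lemma stageStatus_zero (a : ℕ → CAct1 k) (j : Fin r) : stageStatus C a j 0 = false := by
  simp [stageStatus]

lemma stageStatus_succ (a : ℕ → CAct1 k) (j : Fin r) {i : ℕ} (hi : i < k) :
    stageStatus C a j (i + 1) =
      (stageStatus C a j i || C j ⟨i, hi⟩ (stageAssignment a j ⟨i, hi⟩)) := by
  rw [Bool.eq_iff_iff]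
  simp only [stageStatus, Bool.or_eq_true, decide_eq_true_eq]
  constructor
  · rintro ⟨i', hlt, hc⟩
    rcases Nat.lt_succ_iff_lt_or_eq.1 hlt with hlt | rfl
    · exact .inl ⟨i', hlt, hc⟩
    · exact .inr hc
  · rintro (⟨i', hlt, hc⟩ | hc)
    · exact ⟨i', by omega, hc⟩
    · exact ⟨⟨i, hi⟩, by simp, hc⟩

lemma stageStatus_self (a : ℕ → CAct1 k) (j : Fin r) :
    stageStatus C a j k = true ↔ (C j).Sat (stageAssignment a j) := by
  simp [stageStatus, CClause.Sat]

def intendedVertex (a : ℕ → CAct1 k) (n : ℕ) : CV1 k r :=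
  if h : n < r * k then
    let x : Fin (r * k) := ⟨n, h⟩
    .node x.divNat x.modNat (stageStatus C a x.divNat x.modNat)
  else .para false

lemma intendedVertex_ne_para (a : ℕ → CAct1 k) (n : ℕ) :
    intendedVertex C a n ≠ .para true := by
  unfold intendedVertex
  split <;> simp

lemma intendedVertex_mul_add (a : ℕ → CAct1 k) (j : Fin r) (i : Fin k) :
    intendedVertex C a (j * k + i) = .node j i (stageStatus C a j i) := by
  have hlt := Nat.mul_add_lt_mul j.isLt i.isLt
  obtain ⟨hdiv, hmod⟩ : (j * k + i : ℕ) / k = j ∧ (j * k + i : ℕ) % k = i :=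
    (Nat.div_mod_unique i.pos).2 ⟨by ring, i.isLt⟩
  have hj : Fin.divNat (⟨j * k + i, hlt⟩ : Fin (r * k)) = j := Fin.ext hdiv
  have hi : Fin.modNat (⟨j * k + i, hlt⟩ : Fin (r * k)) = i := Fin.ext hmod
  rw [intendedVertex, dif_pos hlt]
  simp only [hj, hi]

lemma intendedVertex_of_le (a : ℕ → CAct1 k) {n : ℕ} (hn : r * k ≤ n) :
    intendedVertex C a n = .para false :=
  dif_neg hn.not_gt

lemma cnfE2_cnfE1_intendedVertex (a : ℕ → CAct1 k) (j : Fin r) (i : Fin k)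
    (hlegal : (a (j * k + i)).1 = i) (u : CAct2) :
    cnfE2 C (cnfE1 C (intendedVertex C a (j * k + i)) (a (j * k + i))) u =
      if (i : ℕ) + 1 = k ∧ ¬ (C j).Sat (stageAssignment a j) then .para true
      else intendedVertex C a (j * k + i + 1) := by
  have hstatus : (stageStatus C a j i || C j i (a (j * k + i)).2) = stageStatus C a j (i + 1) :=
    (stageStatus_succ C a j i.isLt).symm
  rw [intendedVertex_mul_add, cnfE1_node, if_pos hlegal, hstatus]
  by_cases hnext : (i : ℕ) + 1 < k
  · rw [cnfE2, dif_pos hnext, if_neg fun h => absurd h.1 (by omega)]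
    exact (intendedVertex_mul_add C a j ⟨i + 1, hnext⟩).symm
  have hlast : (i : ℕ) + 1 = k := by omega
  rw [cnfE2, dif_neg hnext, hlast]
  by_cases hsat : (C j).Sat (stageAssignment a j)
  · rw [if_pos ((stageStatus_self C a j).2 hsat), if_neg fun h => h.2 hsat]
    by_cases hj : (j : ℕ) + 1 < r
    · have hstage : (j * k + i + 1 : ℕ) = (j + 1) * k + (⟨0, i.pos⟩ : Fin k) := by
        rw [Nat.succ_mul, add_assoc, hlast, Nat.add_zero]
      rw [dif_pos hj, hstage, intendedVertex_mul_add C a ⟨j + 1, hj⟩, stageStatus_zero]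
    · rw [dif_neg hj, intendedVertex_of_le]
      calc r * k ≤ (j + 1) * k := Nat.mul_le_mul_right k (by omega)
        _ = j * k + i + 1 := by rw [Nat.succ_mul, add_assoc, hlast]
  · rw [if_neg fun h => hsat ((stageStatus_self C a j).1 h), if_pos ⟨rfl, hsat⟩]

end CNFGame

section CNFPlay

variable {k r : ℕ} (hk : 0 < k) (hr : 0 < r) (C : Fin r → CClause k) (a : ℕ → CAct1 k)
  (b : ℕ → CAct2)

def cnfPlay : ℕ → CV1 k r :=
  (cnfGame hk hr C).playU (cnfGame hk hr C).init a b

lemma cnfPlay_zero : cnfPlay hk hr C a b 0 = intendedVertex C a 0 := by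
  have h := intendedVertex_mul_add C a ⟨0, hr⟩ ⟨0, hk⟩
  simp only [Nat.zero_mul, Nat.add_zero, stageStatus_zero] at h
  rw [h]
  rfl

lemma cnfPlay_succ (n : ℕ) :
    cnfPlay hk hr C a b (n + 1) = cnfE2 C (cnfE1 C (cnfPlay hk hr C a b n) (a n)) (b n) :=
  rfl

lemma reachWin_cnfGame_iff_exists_cnfPlay :
    (cnfGame hk hr C).reachWin (cnfGame hk hr C).init a b ↔
      ∃ n, cnfPlay hk hr C a b n = .para true := by
  constructor
  · rintro ⟨n, hn⟩
    unfold Game.colorSeq at hn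
    split_ifs at hn
    · exact ⟨n / 2, (cnfF1_eq_two_iff _).1 hn⟩
    · have hE1 : cnfE1 C (cnfPlay hk hr C a b (n / 2)) (a (n / 2)) = .para true :=
        (cnfF2_eq_two_iff _).1 hn
      exact ⟨n / 2 + 1, by rw [cnfPlay_succ, hE1]; rfl⟩
  · rintro ⟨n, hn⟩
    refine ⟨2 * n, ?_⟩
    rw [Game.colorSeq, if_pos (by omega), Nat.mul_div_cancel_left n two_pos]
    exact (cnfF1_eq_two_iff _).2 hn

def SatisfyingRun : Prop :=
  ∀ j : Fin r, (∀ i : Fin k, (a (j * k + i)).1 = i) ∧ (C j).Sat (stageAssignment a j)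

lemma cnfPlay_eq_intendedVertex (h : SatisfyingRun C a) (n : ℕ) :
    cnfPlay hk hr C a b n = intendedVertex C a n := by
  induction n with
  | zero => exact cnfPlay_zero hk hr C a b
  | succ n ih =>
    rw [cnfPlay_succ, ih]
    by_cases hn : n < r * k
    · obtain ⟨j, i, rfl⟩ := exists_fin_eq_mul_add hn
      rw [cnfE2_cnfE1_intendedVertex C a j i ((h j).1 i), if_neg fun hc => hc.2 (h j).2]
    · rw [intendedVertex_of_le C a (not_lt.1 hn), intendedVertex_of_le C a (by omega)]
      rfl

lemma satisfyingRun_of_forall_cnfPlay_ne (h : ∀ n, cnfPlay hk hr C a b n ≠ .para true) :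
    SatisfyingRun C a := by
  have hstep : ∀ (j : Fin r) (i : Fin k),
      cnfPlay hk hr C a b (j * k + i) = intendedVertex C a (j * k + i) →
        (a (j * k + i)).1 = i ∧ ((i : ℕ) + 1 = k → (C j).Sat (stageAssignment a j)) ∧
          cnfPlay hk hr C a b (j * k + i + 1) = intendedVertex C a (j * k + i + 1) := by
    intro j i hv
    have hlegal : (a (j * k + i)).1 = i := by
      have hne := h (j * k + i + 1)
      rw [cnfPlay_succ, hv, intendedVertex_mul_add] at hne
      exact eq_of_cnfE2_cnfE1_ne_para C hne
    have hnext := cnfPlay_succ hk hr C a b (j * k + i)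
    rw [hv, cnfE2_cnfE1_intendedVertex C a j i hlegal] at hnext
    have hcond : ¬ ((i : ℕ) + 1 = k ∧ ¬ (C j).Sat (stageAssignment a j)) :=
      fun hc => h _ (by rw [hnext, if_pos hc])
    exact ⟨hlegal, fun hi => not_not.1 fun hs => hcond ⟨hi, hs⟩,
      by rw [hnext, if_neg hcond]⟩
  have honTrack : ∀ n < r * k, cnfPlay hk hr C a b n = intendedVertex C a n := by
    intro n
    induction n with
    | zero => exact fun _ => cnfPlay_zero hk hr C a b
    | succ n ih =>
      intro hn
      obtain ⟨j, i, rfl⟩ := exists_fin_eq_mul_add (n.lt_succ_self.trans hn)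
      exact (hstep j i (ih (by omega))).2.2
  intro j
  have hk1 : k - 1 < k := Nat.sub_lt hk one_pos
  exact ⟨fun i => (hstep j i (honTrack _ (Nat.mul_add_lt_mul j.isLt i.isLt))).1,
    (hstep j ⟨k - 1, hk1⟩ (honTrack _ (Nat.mul_add_lt_mul j.isLt hk1))).2.1
      (Nat.sub_add_cancel hk)⟩

lemma reachWin_cnfGame_iff :
    (cnfGame hk hr C).reachWin (cnfGame hk hr C).init a b ↔ ¬ SatisfyingRun C a := by
  rw [reachWin_cnfGame_iff_exists_cnfPlay]
  constructor
  · rintro ⟨n, hn⟩ hrun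
    exact intendedVertex_ne_para C a n (cnfPlay_eq_intendedVertex hk hr C a b hrun n ▸ hn)
  · intro hrun
    by_contra hno
    exact hrun (satisfyingRun_of_forall_cnfPlay_ne hk hr C a b fun n hn => hno ⟨n, hn⟩)

end CNFPlay

lemma cnfSat_of_satisfyingRun_outSeq {k r : ℕ} (hr : 0 < r) {C : Fin r → CClause k}
    (T : Transducer (CAct1 k) CAct2 (Fin k)) (h : SatisfyingRun C T.outSeq) : CNFSat C := by
  have hsurj : Function.Surjective fun m => (T.out m).1 := fun i => ⟨_, (h ⟨0, hr⟩).1 i⟩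
  obtain ⟨v, hv⟩ := Finite.exists_snd_eq_of_surjective_fst hsurj
  have hassign : ∀ j : Fin r, stageAssignment T.outSeq j = v :=
    fun j => funext fun i => (hv _).trans (congrArg v ((h j).1 i))
  exact ⟨v, fun j => hassign j ▸ (h j).2⟩

section Liveness

variable {k r : ℕ} (hk : 0 < k) (hr : 0 < r) (C : Fin r → CClause k)

lemma kLiveReach_of_not_cnfSat (h : ¬ CNFSat C) : (cnfGame hk hr C).kLiveReach k := by
  rintro w ⟨T, hT⟩
  refine ⟨T.outSeq, fun _ => (), hT.extendsWord_outSeq, ⟨T, T.infAgrees_outSeq _⟩, ?_⟩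
  exact (reachWin_cnfGame_iff hk hr C _ _).2 fun hrun =>
    h (cnfSat_of_satisfyingRun_outSeq hr T hrun)

lemma not_kLiveReach_of_cnfSat (h : CNFSat C) : ¬ (cnfGame hk hr C).kLiveReach k := by
  obtain ⟨v, hv⟩ := h
  let T := cyclicTransducer (B := CAct2) hk v
  intro hlive
  obtain ⟨a, b, hext, -, hwin⟩ :=
    hlive (hist T.outSeq (fun _ => ()) (r * k)) ⟨T, (T.infAgrees_outSeq _).finAgrees_hist _⟩
  have ha : ∀ (j : Fin r) (i : Fin k), a (j * k + i) = (i, v i) := by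
    intro j i
    rw [hext.apply_eq_of_hist (Nat.mul_add_lt_mul j.isLt i.isLt), cyclicTransducer_outSeq]
    simp only [Nat.mul_add_mod_of_lt i.isLt]
  refine (reachWin_cnfGame_iff hk hr C a b).1 hwin fun j => ⟨fun i => by rw [ha], ?_⟩
  have hassign : stageAssignment a j = v := funext fun i => by rw [stageAssignment, ha]
  exact hassign ▸ hv j

end Liveness

/-- **Theorem 4.** A CNF formula `ψ = C₁ ∧ … ∧ C_r` over the
variables `x₁,…,x_k` is satisfiable if and only if the reachability game `G_ψ` is
not `k`-transducer live. -/
theorem cnf_sat_iff_not_live {k r : ℕ} (hk : 0 < k) (hr : 0 < r)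
    (C : Fin r → CClause k) :
    CNFSat C ↔ ¬ (cnfGame hk hr C).kLiveReach k :=
  ⟨not_kLiveReach_of_cnfSat hk hr C, not_imp_comm.1 (kLiveReach_of_not_cnfSat hk hr C)⟩
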